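/- If M and N are perfect matchings of the complete graph on Fin 6 chosen independently and uniformly at random, then the probability that the union graph M ⊔ N is connected equals 8/15; equivalently, the number of connected pairs (120) divided by the total number of pairs (225) is 8/15. -/

import Mathlib

/-!
A perfect matching `M` of a graph is the same as an involution `σ` sending every vertex to a
neighbour, its partner; the union of the matchings of `σ` and `τ` joins each `v` to `σ v` and
`τ v`. If `σ v = τ v`, then `{v, σ v}` is a whole connected component, so on more than two
vertices the union is disconnected. Otherwise `v, σ v, τ v, τ (σ v)` are four distinct vertices of
the component of `v`; on six vertices two components with at least four vertices each must meet,
so the union is connected. Thus the connected pairs are exactly the edge-disjoint ones, and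
enumerating the involutions of `Fin 6` gives 15 perfect matchings and 120 edge-disjoint pairs.
-/

open Equiv Function

def Equiv.subtypeProdAndEquiv {α β : Type*} {p : α → Prop} {q : β → Prop} {r : α × β → Prop} :
    {c : α × β // p c.1 ∧ q c.2 ∧ r c} ≃ {c : {a // p a} × {b // q b} // r (c.1, c.2)} where
  toFun c := ⟨(⟨c.1.1, c.2.1⟩, ⟨c.1.2, c.2.2.1⟩), c.2.2.2⟩
  invFun c := ⟨(c.1.1, c.1.2), c.1.1.2, c.1.2.2, c.2⟩

namespace SimpleGraph

variable {V : Type*} {G : SimpleGraph V}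

lemma Reachable.mem_of_forall_adj_mem {S : Set V} (hS : ∀ ⦃x y⦄, x ∈ S → G.Adj x y → y ∈ S)
    {u v : V} (h : G.Reachable u v) (hu : u ∈ S) : v ∈ S := by
  rw [reachable_iff_reflTransGen] at h
  induction h with
  | refl => exact hu
  | tail _ hxy ih => exact hS ih hxy

lemma connected_of_card_lt_two_mul_ncard [Finite V] [Nonempty V]
    (h : ∀ v, Nat.card V < 2 * {w | G.Reachable v w}.ncard) : G.Connected := by
  refine (connected_iff G).mpr ⟨fun u v => ?_, inferInstance⟩
  obtain ⟨w, hu, hv⟩ := Set.nonempty_inter_of_lt_ncard_add_ncard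
    (s := {w | G.Reachable u w}) (t := {w | G.Reachable v w}) (by grind)
  exact hu.trans hv.symm

section TwoInvolutions

variable {σ τ : Perm V}

lemma fromRel_adj_iff_of_involutive (hσ : Involutive σ) (hτ : Involutive τ) {x y : V} :
    (fromRel fun x y => σ x = y ∨ τ x = y).Adj x y ↔ x ≠ y ∧ (σ x = y ∨ τ x = y) := by
  rw [fromRel_adj, hσ.eq_iff, hτ.eq_iff]
  grind

lemma four_le_ncard_reachable_fromRel [Finite V] (hσ : ∀ v, σ v ≠ v) (hτ : Involutive τ)
    (hτ' : ∀ v, τ v ≠ v) (hστ : ∀ v, σ v ≠ τ v) (v : V) :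
    4 ≤ {w | (fromRel fun x y => σ x = y ∨ τ x = y).Reachable v w}.ncard := by
  set H := fromRel fun x y => σ x = y ∨ τ x = y
  have hσadj : ∀ x, H.Adj x (σ x) := fun x => ⟨(hσ x).symm, .inl (.inl rfl)⟩
  have hτadj : ∀ x, H.Adj x (τ x) := fun x => ⟨(hτ' x).symm, .inl (.inr rfl)⟩
  have hsub : {v, σ v, τ v, τ (σ v)} ⊆ {w | H.Reachable v w} := by
    rintro w (rfl | rfl | rfl | rfl)
    exacts [Reachable.rfl, (hσadj v).reachable, (hτadj v).reachable,
      (hσadj v).reachable.trans (hτadj _).reachable]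
  have hτσ : τ (σ v) ≠ v := fun h => hστ v (by rw [← hτ (σ v), h])
  have hcard : ({v, σ v, τ v, τ (σ v)} : Set V).ncard = 4 := by
    rw [Set.ncard_insert_of_notMem, Set.ncard_insert_of_notMem, Set.ncard_pair]
    all_goals grind [τ.injective.ne (hσ v)]
  exact hcard ▸ Set.ncard_le_ncard hsub

lemma connected_fromRel_of_forall_apply_ne [Finite V] [Nonempty V] (hV : Nat.card V < 8)
    (hσ : ∀ v, σ v ≠ v) (hτ : Involutive τ) (hτ' : ∀ v, τ v ≠ v) (hστ : ∀ v, σ v ≠ τ v) :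
    (fromRel fun x y => σ x = y ∨ τ x = y).Connected :=
  connected_of_card_lt_two_mul_ncard fun v => by
    have := four_le_ncard_reachable_fromRel hσ hτ hτ' hστ v
    omega

lemma not_connected_fromRel_of_apply_eq (hV : 2 < Nat.card V) (hσ : Involutive σ)
    (hτ : Involutive τ) {v : V} (hστ : σ v = τ v) :
    ¬ (fromRel fun x y => σ x = y ∨ τ x = y).Connected := by
  intro hconn
  have hclosed : ∀ ⦃x y⦄, x ∈ ({v, σ v} : Set V) →
      (fromRel fun x y => σ x = y ∨ τ x = y).Adj x y → y ∈ ({v, σ v} : Set V) := by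
    rintro x y hx hxy
    rw [fromRel_adj_iff_of_involutive hσ hτ] at hxy
    grind [hσ v, hτ v]
  have huniv : ({v, σ v} : Set V) = Set.univ :=
    Set.eq_univ_of_forall fun w => (hconn v w).mem_of_forall_adj_mem hclosed (by simp)
  have := Set.ncard_insert_le v {σ v}
  rw [huniv, Set.ncard_univ, Set.ncard_singleton] at this
  omega

lemma connected_fromRel_iff (hV : Nat.card V = 6) (hσ : Involutive σ) (hσ' : ∀ v, σ v ≠ v)
    (hτ : Involutive τ) (hτ' : ∀ v, τ v ≠ v) :
    (fromRel fun x y => σ x = y ∨ τ x = y).Connected ↔ ∀ v, σ v ≠ τ v := by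
  have : Finite V := Nat.finite_of_card_ne_zero (by omega)
  have : Nonempty V := (Nat.card_pos_iff.mp (by omega)).1
  exact ⟨fun hconn v hv => not_connected_fromRel_of_apply_eq (by omega) hσ hτ hv hconn,
    connected_fromRel_of_forall_apply_ne (by omega) hσ' hτ hτ'⟩

end TwoInvolutions

namespace Subgraph

variable {M N : G.Subgraph}

noncomputable def IsPerfectMatching.toPerm (h : M.IsPerfectMatching) : Perm V :=
  let partner v := (isPerfectMatching_iff.mp h v).choose
  have adj v : M.Adj v (partner v) := (isPerfectMatching_iff.mp h v).choose_spec.1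
  Involutive.toPerm partner fun v => h.1.eq_of_adj_left (adj (partner v)) (adj v).symm

lemma IsPerfectMatching.toPerm_eq_iff (h : M.IsPerfectMatching) {v w : V} :
    h.toPerm v = w ↔ M.Adj v w := by
  obtain ⟨hadj, hunique⟩ := (isPerfectMatching_iff.mp h v).choose_spec
  exact ⟨by rintro rfl; exact hadj, fun hvw => (hunique w hvw).symm⟩

lemma IsPerfectMatching.involutive_toPerm (h : M.IsPerfectMatching) : Involutive h.toPerm :=
  fun _ => h.toPerm_eq_iff.mpr (h.toPerm_eq_iff.mp rfl).symm

lemma IsPerfectMatching.adj_toPerm (h : M.IsPerfectMatching) (v : V) : G.Adj v (h.toPerm v) :=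
  M.adj_sub (h.toPerm_eq_iff.mp rfl)

lemma IsPerfectMatching.toPerm_apply_ne (h : M.IsPerfectMatching) (v : V) : h.toPerm v ≠ v :=
  (G.ne_of_adj (h.adj_toPerm v)).symm

def ofInvolution (σ : Perm V) (hσ : ∀ v, σ (σ v) = v ∧ G.Adj v (σ v)) : G.Subgraph where
  verts := Set.univ
  Adj v w := σ v = w
  adj_sub := by rintro v _ rfl; exact (hσ v).2
  edge_vert _ := Set.mem_univ _
  symm := ⟨by rintro v _ rfl; exact (hσ v).1⟩

lemma isPerfectMatching_ofInvolution (σ : Perm V) (hσ : ∀ v, σ (σ v) = v ∧ G.Adj v (σ v)) :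
    (ofInvolution σ hσ).IsPerfectMatching :=
  isPerfectMatching_iff.mpr fun _ => existsUnique_eq'

noncomputable def perfectMatchingEquiv :
    {M : G.Subgraph // M.IsPerfectMatching} ≃ {σ : Perm V // ∀ v, σ (σ v) = v ∧ G.Adj v (σ v)}
    where
  toFun M := ⟨M.2.toPerm, fun v => ⟨M.2.involutive_toPerm v, M.2.adj_toPerm v⟩⟩
  invFun σ := ⟨ofInvolution σ.1 σ.2, isPerfectMatching_ofInvolution σ.1 σ.2⟩
  left_inv M := by
    ext v w
    · exact iff_of_true trivial (M.2.2 v)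
    · exact M.2.toPerm_eq_iff
  right_inv σ := Subtype.ext <| Equiv.ext fun v =>
    (isPerfectMatching_ofInvolution σ.1 σ.2).toPerm_eq_iff.mpr rfl

lemma IsPerfectMatching.spanningCoe_sup (hM : M.IsPerfectMatching) (hN : N.IsPerfectMatching) :
    (M ⊔ N).spanningCoe = fromRel fun x y => hM.toPerm x = y ∨ hN.toPerm x = y := by
  ext x y
  rw [fromRel_adj_iff_of_involutive hM.involutive_toPerm hN.involutive_toPerm,
    hM.toPerm_eq_iff, hN.toPerm_eq_iff, spanningCoe_adj, sup_adj]
  exact ⟨fun h => ⟨h.elim (G.ne_of_adj <| M.adj_sub ·) (G.ne_of_adj <| N.adj_sub ·), h⟩, And.right⟩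

lemma IsPerfectMatching.connected_spanningCoe_sup_iff (hV : Nat.card V = 6)
    (hM : M.IsPerfectMatching) (hN : N.IsPerfectMatching) :
    (M ⊔ N).spanningCoe.Connected ↔ ∀ v, hM.toPerm v ≠ hN.toPerm v := by
  rw [hM.spanningCoe_sup hN]
  exact connected_fromRel_iff hV hM.involutive_toPerm hM.toPerm_apply_ne hN.involutive_toPerm
    hN.toPerm_apply_ne

end Subgraph

lemma card_perfectMatchings_top_fin_six :
    Nat.card {M : (⊤ : SimpleGraph (Fin 6)).Subgraph // M.IsPerfectMatching} = 15 := by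
  rw [Nat.card_congr Subgraph.perfectMatchingEquiv, Nat.card_eq_fintype_card]
  decide

set_option maxRecDepth 4000 in
lemma card_connected_perfectMatching_pairs_top_fin_six :
    Nat.card {p : (⊤ : SimpleGraph (Fin 6)).Subgraph × (⊤ : SimpleGraph (Fin 6)).Subgraph //
      p.1.IsPerfectMatching ∧ p.2.IsPerfectMatching ∧ (p.1 ⊔ p.2).spanningCoe.Connected} = 120 := by
  rw [Nat.card_congr <| subtypeProdAndEquiv.trans <|
    (Subgraph.perfectMatchingEquiv.prodCongr Subgraph.perfectMatchingEquiv).subtypeEquiv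
      (q := fun q => ∀ v, q.1.1 v ≠ q.2.1 v)
      fun q => q.1.2.connected_spanningCoe_sup_iff (by simp) q.2.2, Nat.card_eq_fintype_card]
  decide

end SimpleGraph

/-- If `M` and `N` are perfect matchings of the complete graph on `Fin 6` chosen independently
and uniformly at random, the probability that the union graph `M ⊔ N` is connected equals
`8 / 15`: the number of connected pairs divided by the total number of pairs is `8 / 15`;
equivalently `120 / 225 = 8 / 15`. -/
theorem prob_union_connected_eq :
    ((Nat.card {p : (⊤ : SimpleGraph (Fin 6)).Subgraph × (⊤ : SimpleGraph (Fin 6)).Subgraph //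
        p.1.IsPerfectMatching ∧ p.2.IsPerfectMatching ∧
          (p.1 ⊔ p.2).spanningCoe.Connected} : ℚ) /
      (Nat.card {p : (⊤ : SimpleGraph (Fin 6)).Subgraph × (⊤ : SimpleGraph (Fin 6)).Subgraph //
        p.1.IsPerfectMatching ∧ p.2.IsPerfectMatching} : ℚ) = 8 / 15) ∧
    (120 : ℚ) / 225 = 8 / 15 := by
  rw [SimpleGraph.card_connected_perfectMatching_pairs_top_fin_six,
    Nat.card_congr subtypeProdEquivProd, Nat.card_prod,
    SimpleGraph.card_perfectMatchings_top_fin_six]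
  norm_num
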